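/- arXiv:2410.06090 — 3 statements merged into one kernel-verified Lean document; each statement's English description precedes it below -/
import Mathlib

section
/- Let P : [0,T] → S^n be continuous, and suppose that at every t₀ ∈ [0,T] the limit P'(t₀) := lim_{t→t₀} (P(t) − P(t₀))/(t − t₀) exists and satisfies −P'(t₀) ≤ P(t₀)A(t₀) + A(t₀)ᵀP(t₀) + C(t₀)ᵀP(t₀)C(t₀) + Q̂ in the Loewner order, where A, C : [0,T] → ℝ^{n×n} are continuous and Q̂ ∈ S^n is positive definite. If 0 ≤ P(t) for all t and P(T) = G with 0 ≤ G ≤ Ĝ for a positive definite Ĝ, then sup_{t∈[0,T]} |P(t)| ≤ (|Ĝ| + T|Q̂|) · exp(∫₀^T (2|A(s)| + |C(s)|²) ds). -/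
/-! For a fixed vector `x`, the Riccati inequality bounds the derivative of `x ⬝ᵥ P t *ᵥ x` from
below by `-((2‖A t‖ + ‖C t‖²)‖P t‖ + ‖Q̂‖)‖x‖²`. Integrating from `s` to `T` and using that the
operator norm of a positive semidefinite matrix is the largest value of its quadratic form on the
unit sphere gives `‖P s‖ ≤ ‖Ĝ‖ + T‖Q̂‖ + ∫ₛᵀ (2‖A‖ + ‖C‖²)‖P‖`, and Grönwall's inequality, run
backwards from `T`, concludes. -/

open Matrix Set Real
open scoped Matrix.Norms.L2Operator

lemma EuclideanSpace.norm_toLp_sq {n : Type*} [Fintype n] (x : n → ℝ) :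
    ‖WithLp.toLp 2 x‖ ^ 2 = x ⬝ᵥ x := by
  rw [EuclideanSpace.norm_sq_eq]
  simp [dotProduct, sq]

namespace Matrix

variable {n : Type*} [Fintype n] [DecidableEq n]

lemma l2_opNorm_transpose (M : Matrix n n ℝ) : ‖Mᵀ‖ = ‖M‖ := by
  rw [← conjTranspose_eq_transpose_of_trivial, l2_opNorm_conjTranspose]

lemma inner_toEuclideanCLM_self (M : Matrix n n ℝ) (x : n → ℝ) :
    inner ℝ (toEuclideanCLM (𝕜 := ℝ) M (WithLp.toLp 2 x)) (WithLp.toLp 2 x) = x ⬝ᵥ M *ᵥ x := by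
  simp [EuclideanSpace.inner_eq_star_dotProduct]

lemma dotProduct_mulVec_self_le_l2_opNorm (M : Matrix n n ℝ) (x : n → ℝ) :
    x ⬝ᵥ M *ᵥ x ≤ ‖M‖ * (x ⬝ᵥ x) := by
  rw [← inner_toEuclideanCLM_self, ← EuclideanSpace.norm_toLp_sq,
    ← l2_opNorm_toEuclideanCLM (𝕜 := ℝ)]
  calc _ ≤ ‖toEuclideanCLM (𝕜 := ℝ) M (WithLp.toLp 2 x)‖ * ‖WithLp.toLp 2 x‖ :=
        real_inner_le_norm _ _
    _ ≤ ‖toEuclideanCLM (𝕜 := ℝ) M‖ * ‖WithLp.toLp 2 x‖ * ‖WithLp.toLp 2 x‖ := by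
        gcongr; exact ContinuousLinearMap.le_opNorm _ _
    _ = _ := by ring

lemma PosSemidef.l2_opNorm_le {M : Matrix n n ℝ} (hM : M.PosSemidef) {c : ℝ} (hc : 0 ≤ c)
    (h : ∀ x, x ⬝ᵥ M *ᵥ x ≤ c * (x ⬝ᵥ x)) : ‖M‖ ≤ c := by
  have hT : (toEuclideanCLM (𝕜 := ℝ) M : EuclideanSpace ℝ n →ₗ[ℝ] EuclideanSpace ℝ n).IsSymmetric :=
    isSymmetric_toEuclideanLin_iff.mpr hM.isHermitian
  rw [← l2_opNorm_toEuclideanCLM (𝕜 := ℝ),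
    ContinuousLinearMap.norm_eq_iSup_rayleighQuotient (toEuclideanCLM (𝕜 := ℝ) M) hT]
  refine ciSup_le fun y => ?_
  obtain ⟨x, rfl⟩ : ∃ x, WithLp.toLp 2 x = y := ⟨y.ofLp, rfl⟩
  rw [ContinuousLinearMap.rayleighQuotient, ContinuousLinearMap.reApplyInnerSelf_apply,
    RCLike.re_to_real, inner_toEuclideanCLM_self, EuclideanSpace.norm_toLp_sq]
  have hx : 0 ≤ x ⬝ᵥ M *ᵥ x := by simpa using hM.dotProduct_mulVec_nonneg x
  have hxx : 0 ≤ x ⬝ᵥ x := EuclideanSpace.norm_toLp_sq x ▸ sq_nonneg _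
  rw [abs_of_nonneg (div_nonneg hx hxx)]
  exact div_le_of_le_mul₀ hxx hc (h x)

lemma PosSemidef.l2_opNorm_le_of_posSemidef_sub {M N : Matrix n n ℝ} (hN : N.PosSemidef)
    (h : (M - N).PosSemidef) : ‖N‖ ≤ ‖M‖ := by
  refine hN.l2_opNorm_le (norm_nonneg M) fun x => ?_
  have hx : 0 ≤ x ⬝ᵥ (M - N) *ᵥ x := by simpa using h.dotProduct_mulVec_nonneg x
  rw [sub_mulVec, dotProduct_sub] at hx
  linarith [dotProduct_mulVec_self_le_l2_opNorm M x]

lemma l2_opNorm_riccati_le (P A C Q : Matrix n n ℝ) :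
    ‖P * A + Aᵀ * P + Cᵀ * P * C + Q‖ ≤ (2 * ‖A‖ + ‖C‖ ^ 2) * ‖P‖ + ‖Q‖ := by
  have hPA := l2_opNorm_mul P A
  have hAP := l2_opNorm_mul Aᵀ P
  have hCPC := (l2_opNorm_mul (Cᵀ * P) C).trans
    (mul_le_mul_of_nonneg_right (l2_opNorm_mul Cᵀ P) (norm_nonneg C))
  rw [l2_opNorm_transpose] at hAP hCPC
  calc _ ≤ ‖P * A‖ + ‖Aᵀ * P‖ + ‖Cᵀ * P * C‖ + ‖Q‖ := norm_add₄_le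
    _ ≤ ‖P‖ * ‖A‖ + ‖A‖ * ‖P‖ + ‖C‖ * ‖P‖ * ‖C‖ + ‖Q‖ := by gcongr
    _ = _ := by ring

end Matrix

lemma hasDerivAt_integral_left_of_mem_Ioo {f : ℝ → ℝ} {a b t : ℝ} (hf : ContinuousOn f (Icc a b))
    (ht : t ∈ Ioo a b) : HasDerivAt (fun s => ∫ r in s..b, f r) (-f t) t :=
  intervalIntegral.integral_hasDerivAt_left
    ((hf.mono (Icc_subset_Icc ht.1.le le_rfl)).intervalIntegrable_of_Icc ht.2.le)
    ((hf.mono Ioo_subset_Icc_self).stronglyMeasurableAtFilter isOpen_Ioo t ht)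
    (hf.continuousAt (Icc_mem_nhds ht.1 ht.2))

lemma continuousOn_integral_left {f : ℝ → ℝ} {a b : ℝ} (hf : ContinuousOn f (Icc a b)) :
    ContinuousOn (fun s => ∫ r in s..b, f r) (Icc a b) := by
  rcases le_or_gt a b with hab | hab
  · rw [← uIcc_of_le hab] at hf ⊢
    exact intervalIntegral.continuousOn_primitive_interval_left
      (hf.integrableOn_compact isCompact_uIcc)
  · simp [Icc_eq_empty_of_lt hab]

theorem le_mul_exp_integral_of_le_add_integral {K u : ℝ → ℝ} {a b c : ℝ}
    (hK : ContinuousOn K (Icc a b)) (hu : ContinuousOn u (Icc a b))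
    (hK0 : ∀ t ∈ Icc a b, 0 ≤ K t) (h : ∀ t ∈ Icc a b, u t ≤ c + ∫ s in t..b, K s * u s) :
    ∀ t ∈ Icc a b, u t ≤ c * exp (∫ s in t..b, K s) := by
  set U : ℝ → ℝ := fun t => c + ∫ s in t..b, K s * u s
  set I : ℝ → ℝ := fun t => ∫ s in t..b, K s
  have hKu : ContinuousOn (fun s => K s * u s) (Icc a b) := hK.mul hu
  have hmono : MonotoneOn (fun t => U t * exp (-I t)) (Icc a b) := by
    refine monotoneOn_of_hasDerivWithinAt_nonneg (convex_Icc a b)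
      (((continuousOn_integral_left hKu).const_add c).mul
        (continuousOn_integral_left hK).neg.rexp) (fun t ht => ?_) (fun t ht => ?_)
      (f' := fun t => K t * exp (-I t) * (U t - u t))
    · rw [interior_Icc] at ht
      have hU : HasDerivAt U (-(K t * u t)) t :=
        (hasDerivAt_integral_left_of_mem_Ioo hKu ht).const_add c
      have hE : HasDerivAt (fun s => exp (-I s)) (exp (-I t) * K t) t := by
        simpa using (hasDerivAt_integral_left_of_mem_Ioo hK ht).neg.exp
      exact ((hU.fun_mul hE).congr_deriv (by ring)).hasDerivWithinAt
    · rw [interior_Icc] at ht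
      have ht' : t ∈ Icc a b := Ioo_subset_Icc_self ht
      exact mul_nonneg (mul_nonneg (hK0 t ht') (exp_pos _).le) (sub_nonneg.2 (h t ht'))
  intro t ht
  have hb : b ∈ Icc a b := ⟨ht.1.trans ht.2, le_rfl⟩
  have hUt : U t * exp (-I t) ≤ c := by
    simpa [U, I] using hmono ht hb ht.2
  calc u t ≤ U t := h t ht
    _ = U t * exp (-I t) * exp (I t) := by
        rw [mul_assoc, ← exp_add, neg_add_cancel, exp_zero, mul_one]
    _ ≤ c * exp (I t) := by gcongr

lemma HasDerivWithinAt.dotProduct_mulVec_self {n : Type*} [Fintype n] [DecidableEq n]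
    {P : ℝ → Matrix n n ℝ} {P' : Matrix n n ℝ} {s : Set ℝ} {t : ℝ}
    (h : HasDerivWithinAt P P' s t) (x : n → ℝ) :
    HasDerivWithinAt (fun t => x ⬝ᵥ P t *ᵥ x) (x ⬝ᵥ P' *ᵥ x) s t := by
  let q : Matrix n n ℝ →ₗ[ℝ] ℝ :=
    { toFun := fun M => x ⬝ᵥ M *ᵥ x
      map_add' := fun M N => by rw [add_mulVec, dotProduct_add]
      map_smul' := fun c M => by rw [smul_mulVec, dotProduct_smul, RingHom.id_apply, smul_eq_mul] }
  exact (LinearMap.toContinuousLinearMap q).hasFDerivAt.comp_hasDerivWithinAt t h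

theorem Matrix.l2_opNorm_le_add_integral_of_riccati {n : Type*} [Fintype n] [DecidableEq n]
    {A C P P' : ℝ → Matrix n n ℝ} {Q : Matrix n n ℝ} {a b : ℝ} (hab : a ≤ b)
    (hA : ContinuousOn A (Icc a b)) (hC : ContinuousOn C (Icc a b))
    (hP : ∀ t ∈ Icc a b, HasDerivWithinAt P (P' t) (Icc a b) t)
    (hineq : ∀ t ∈ Icc a b,
      (P t * A t + (A t)ᵀ * P t + (C t)ᵀ * P t * C t + Q + P' t).PosSemidef)
    (hPa : (P a).PosSemidef) :
    ‖P a‖ ≤ ‖P b‖ + (b - a) * ‖Q‖ + ∫ t in a..b, (2 * ‖A t‖ + ‖C t‖ ^ 2) * ‖P t‖ := by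
  set k : ℝ → ℝ := fun t => (2 * ‖A t‖ + ‖C t‖ ^ 2) * ‖P t‖
  have hPc : ContinuousOn P (Icc a b) := fun t ht => (hP t ht).continuousWithinAt
  have hk : ContinuousOn k (Icc a b) := by fun_prop
  have hk0 : 0 ≤ ∫ t in a..b, k t := intervalIntegral.integral_nonneg hab fun t _ => by positivity
  refine hPa.l2_opNorm_le (by positivity) fun x => ?_
  have hxx : 0 ≤ x ⬝ᵥ x := EuclideanSpace.norm_toLp_sq x ▸ sq_nonneg _
  have hlow : ∀ t ∈ Ioo a b, -((k t + ‖Q‖) * (x ⬝ᵥ x)) ≤ x ⬝ᵥ P' t *ᵥ x := by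
    intro t ht
    have h0 := (hineq t (Ioo_subset_Icc_self ht)).dotProduct_mulVec_nonneg x
    simp only [star_trivial, add_mulVec _ (P' t), dotProduct_add] at h0
    have hM := dotProduct_mulVec_self_le_l2_opNorm
      (P t * A t + (A t)ᵀ * P t + (C t)ᵀ * P t * C t + Q) x
    have hR := mul_le_mul_of_nonneg_right (l2_opNorm_riccati_le (P t) (A t) (C t) Q) hxx
    linarith
  have hint : ∫ t in a..b, -((k t + ‖Q‖) * (x ⬝ᵥ x)) ≤ x ⬝ᵥ P b *ᵥ x - x ⬝ᵥ P a *ᵥ x :=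
    intervalIntegral.integral_le_sub_of_hasDeriv_right_of_le hab
      (fun t ht => ((hP t ht).dotProduct_mulVec_self x).continuousWithinAt)
      (fun t ht => (((hP t (Ioo_subset_Icc_self ht)).dotProduct_mulVec_self x).hasDerivAt
        (Icc_mem_nhds ht.1 ht.2)).hasDerivWithinAt)
      (ContinuousOn.integrableOn_Icc (by fun_prop)) hlow
  rw [intervalIntegral.integral_neg, intervalIntegral.integral_mul_const,
    intervalIntegral.integral_add (hk.intervalIntegrable_of_Icc hab) intervalIntegrable_const,
    intervalIntegral.integral_const, smul_eq_mul] at hint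
  have hPb := dotProduct_mulVec_self_le_l2_opNorm (P b) x
  linarith

theorem apriori_bound_differential_form_general {n : ℕ} (T : ℝ)
    (A C : ℝ → Matrix (Fin n) (Fin n) ℝ)
    (hA : ContinuousOn A (Set.Icc 0 T)) (hC : ContinuousOn C (Set.Icc 0 T))
    (P P' : ℝ → Matrix (Fin n) (Fin n) ℝ)
    (Qhat Ghat : Matrix (Fin n) (Fin n) ℝ)
    (hderiv : ∀ t₀ ∈ Set.Icc (0:ℝ) T, HasDerivWithinAt P (P' t₀) (Set.Icc 0 T) t₀)
    (hineq : ∀ t₀ ∈ Set.Icc (0:ℝ) T,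
      (P t₀ * A t₀ + (A t₀)ᵀ * P t₀ + (C t₀)ᵀ * P t₀ * C t₀ + Qhat + P' t₀).PosSemidef)
    (hPpos : ∀ t ∈ Set.Icc (0:ℝ) T, (P t).PosSemidef)
    (hPT : (Ghat - P T).PosSemidef) :
    ∀ t ∈ Set.Icc (0:ℝ) T,
      ‖P t‖ ≤ (‖Ghat‖ + T * ‖Qhat‖) *
        Real.exp (∫ s in (0:ℝ)..T, (2 * ‖A s‖ + ‖C s‖ ^ 2)) := by
  intro t ht
  have hT : 0 ≤ T := ht.1.trans ht.2
  have hP : ContinuousOn P (Icc 0 T) := fun s hs => (hderiv s hs).continuousWithinAt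
  have hK : ContinuousOn (fun s => 2 * ‖A s‖ + ‖C s‖ ^ 2) (Icc 0 T) := by fun_prop
  have hPT_le : ‖P T‖ ≤ ‖Ghat‖ := (hPpos T ⟨hT, le_rfl⟩).l2_opNorm_le_of_posSemidef_sub hPT
  have hint : ∀ s ∈ Icc 0 T,
      ‖P s‖ ≤ ‖Ghat‖ + T * ‖Qhat‖ + ∫ r in s..T, (2 * ‖A r‖ + ‖C r‖ ^ 2) * ‖P r‖ := by
    intro s hs
    have hsub : Icc s T ⊆ Icc 0 T := Icc_subset_Icc hs.1 le_rfl
    have := l2_opNorm_le_add_integral_of_riccati hs.2 (hA.mono hsub) (hC.mono hsub)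
      (fun r hr => (hderiv r (hsub hr)).mono hsub) (fun r hr => hineq r (hsub hr)) (hPpos s hs)
    nlinarith [hs.1, norm_nonneg Qhat]
  calc ‖P t‖ ≤ (‖Ghat‖ + T * ‖Qhat‖) * exp (∫ s in t..T, (2 * ‖A s‖ + ‖C s‖ ^ 2)) :=
        le_mul_exp_integral_of_le_add_integral hK hP.norm (fun s _ => by positivity) hint t ht
    _ ≤ _ := by
        gcongr
        exact intervalIntegral.integral_mono_interval ht.1 ht.2 le_rfl
          (Filter.Eventually.of_forall fun s => by positivity) (hK.intervalIntegrable_of_Icc hT)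

/-- Grönwall-type a priori bound for a matrix differential inequality
(differential form, Proposition 3.1). -/
theorem apriori_bound_differential_form {n : ℕ} (T : ℝ) (hT : 0 < T)
    (A C : ℝ → Matrix (Fin n) (Fin n) ℝ)
    (hA : ContinuousOn A (Set.Icc 0 T)) (hC : ContinuousOn C (Set.Icc 0 T))
    (P P' : ℝ → Matrix (Fin n) (Fin n) ℝ)
    (Qhat Ghat : Matrix (Fin n) (Fin n) ℝ)
    (hQhat : Qhat.PosDef) (hGhat : Ghat.PosDef)
    (hPcont : ContinuousOn P (Set.Icc 0 T))
    (hPsymm : ∀ t ∈ Set.Icc (0:ℝ) T, (P t).IsSymm)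
    (hderiv : ∀ t₀ ∈ Set.Icc (0:ℝ) T, HasDerivWithinAt P (P' t₀) (Set.Icc 0 T) t₀)
    (hineq : ∀ t₀ ∈ Set.Icc (0:ℝ) T,
      (P t₀ * A t₀ + (A t₀)ᵀ * P t₀ + (C t₀)ᵀ * P t₀ * C t₀ + Qhat + P' t₀).PosSemidef)
    (hPpos : ∀ t ∈ Set.Icc (0:ℝ) T, (P t).PosSemidef)
    (hPT : (Ghat - P T).PosSemidef) :
    ∀ t ∈ Set.Icc (0:ℝ) T,
      ‖P t‖ ≤ (‖Ghat‖ + T * ‖Qhat‖) *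
        Real.exp (∫ s in (0:ℝ)..T, (2 * ‖A s‖ + ‖C s‖ ^ 2)) :=
  apriori_bound_differential_form_general T A C hA hC P P' Qhat Ghat hderiv hineq hPpos hPT
end

section
/- Let P : [0,T] → S^n satisfy, for all 0 ≤ t ≤ T, P(t) − G(T) ≤ ∫_t^T [P(s)A(s) + A(s)ᵀP(s) + C(s)ᵀP(s)C(s) + Q̂] ds in the Loewner order, where P is continuous and nonnegative (P(t) ≥ 0), A, C : [0,T] → ℝ^{n×n} are continuous, Q̂ ≥ 0, and 0 ≤ G(T) ≤ Ĝ. Then |P(t)| ≤ (|Ĝ| + T|Q̂|) e^{∫_t^T (2|A(s)| + |C(s)|²) ds} for all t ∈ [0,T]. -/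
/-!
Under the hypothesis, `0 ≤ P t ≤ Ĝ + ∫_t^T (P A + Aᵀ P + Cᵀ P C + Q̂)` in the Loewner order, and
the operator norm is monotone on positive semidefinite matrices (compare Rayleigh quotients).
Since the integrand has norm at most `(2‖A‖ + ‖C‖²) ‖P‖ + ‖Q̂‖`, the scalar function `‖P‖`
satisfies `‖P t‖ ≤ ‖Ĝ‖ + T ‖Q̂‖ + ∫_t^T (2‖A‖ + ‖C‖²) ‖P‖`, and a backward Grönwall argument
gives the exponential bound.
-/

open Matrix
open scoped Matrix.Norms.L2Operator

attribute [local instance] Matrix.instL2OpNormedSpace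

open intervalIntegral

namespace Matrix

open scoped ComplexOrder in
lemma PosSemidef.l2_opNorm_le_of_posSemidef_sub_s4 {𝕜 m : Type*} [RCLike 𝕜] [Fintype m]
    [DecidableEq m] {M N : Matrix m m 𝕜} (hM : M.PosSemidef) (hNM : (N - M).PosSemidef) :
    ‖M‖ ≤ ‖N‖ := by
  set L := toEuclideanCLM (n := m) (𝕜 := 𝕜)
  have isPositive_L {X : Matrix m m 𝕜} (hX : X.PosSemidef) : (L X).IsPositive := by
    rw [← ContinuousLinearMap.isPositive_toLinearMap_iff, coe_toEuclideanCLM_eq_toEuclideanLin]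
    exact isPositive_toEuclideanLin_iff.mpr hX
  have rayleigh_nonneg {X : Matrix m m 𝕜} (hX : X.PosSemidef) (x) :
      0 ≤ (L X).rayleighQuotient x :=
    div_nonneg ((isPositive_L hX).re_inner_nonneg_left x) (by positivity)
  rw [cstar_norm_def,
    ContinuousLinearMap.norm_eq_iSup_rayleighQuotient _ (isPositive_L hM).isSymmetric]
  refine ciSup_le fun x => ?_
  have hsplit := (L M).rayleighQuotient_add (L (N - M)) (x := x)
  rw [← map_add, add_sub_cancel] at hsplit
  calc |(L M).rayleighQuotient x| = (L M).rayleighQuotient x :=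
        abs_of_nonneg (rayleigh_nonneg hM x)
    _ ≤ (L N).rayleighQuotient x := by linarith [rayleigh_nonneg hNM x]
    _ ≤ ‖N‖ := (le_abs_self _).trans ((L N).rayleighQuotient_le_norm x)

variable {m : Type*} [Fintype m] [DecidableEq m]

lemma l2_opNorm_transpose_s4 (A : Matrix m m ℝ) : ‖Aᵀ‖ = ‖A‖ := by
  rw [← conjTranspose_eq_transpose_of_trivial, l2_opNorm_conjTranspose]

lemma l2_opNorm_mul_add_transpose_mul_add_transpose_mul_mul_add_le (P A C Q : Matrix m m ℝ) :
    ‖P * A + Aᵀ * P + Cᵀ * P * C + Q‖ ≤ (2 * ‖A‖ + ‖C‖ ^ 2) * ‖P‖ + ‖Q‖ := by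
  have hPA : ‖P * A‖ ≤ ‖P‖ * ‖A‖ := norm_mul_le _ _
  have hAP : ‖Aᵀ * P‖ ≤ ‖A‖ * ‖P‖ := (norm_mul_le _ _).trans_eq (by rw [l2_opNorm_transpose_s4])
  have hCPC : ‖Cᵀ * P * C‖ ≤ ‖C‖ * ‖P‖ * ‖C‖ :=
    norm_mul₃_le.trans_eq (by rw [l2_opNorm_transpose_s4])
  calc ‖P * A + Aᵀ * P + Cᵀ * P * C + Q‖
      ≤ ‖P * A‖ + ‖Aᵀ * P‖ + ‖Cᵀ * P * C‖ + ‖Q‖ := norm_add₄_le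
    _ ≤ (2 * ‖A‖ + ‖C‖ ^ 2) * ‖P‖ + ‖Q‖ := by nlinarith

end Matrix

section IntervalIntegral

variable {E : Type*} [NormedAddCommGroup E] [NormedSpace ℝ E] {a b : ℝ} {u : ℝ → E}

lemma continuousOn_integral_left_of_continuousOn (hab : a ≤ b)
    (hu : ContinuousOn u (Set.Icc a b)) :
    ContinuousOn (fun r => ∫ s in r..b, u s) (Set.Icc a b) := by
  rw [← Set.uIcc_of_le hab] at hu ⊢
  exact continuousOn_primitive_interval_left (hu.integrableOn_compact isCompact_uIcc)

lemma hasDerivAt_integral_left_of_continuousOn [CompleteSpace E]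
    (hu : ContinuousOn u (Set.Icc a b)) {x : ℝ} (hx : x ∈ Set.Ioo a b) :
    HasDerivAt (fun r => ∫ s in r..b, u s) (-u x) x := by
  have hsub : Set.uIcc x b ⊆ Set.Icc a b := by
    rw [Set.uIcc_of_le hx.2.le]; exact Set.Icc_subset_Icc_left hx.1.le
  exact integral_hasDerivAt_left ((hu.mono hsub).intervalIntegrable)
    (hu.mono Set.Ioo_subset_Icc_self |>.stronglyMeasurableAtFilter isOpen_Ioo x hx)
    ((hu x (Set.Ioo_subset_Icc_self hx)).continuousAt (Icc_mem_nhds hx.1 hx.2))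

lemma norm_integral_le_integral_add_mul_of_continuousOn (hab : a ≤ b) {g : ℝ → ℝ} {c : ℝ}
    (hu : ContinuousOn u (Set.Icc a b)) (hg : ContinuousOn g (Set.Icc a b))
    (hle : ∀ s ∈ Set.Icc a b, ‖u s‖ ≤ g s + c) :
    ‖∫ s in a..b, u s‖ ≤ (∫ s in a..b, g s) + (b - a) * c := by
  rw [← Set.uIcc_of_le hab] at hu hg
  calc ‖∫ s in a..b, u s‖ ≤ ∫ s in a..b, ‖u s‖ := norm_integral_le_integral_norm hab
    _ ≤ ∫ s in a..b, (g s + c) :=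
      integral_mono_on hab hu.norm.intervalIntegrable (hg.add continuousOn_const).intervalIntegrable
        hle
    _ = (∫ s in a..b, g s) + (b - a) * c := by
      rw [integral_add hg.intervalIntegrable intervalIntegrable_const, integral_const,
        smul_eq_mul]

theorem le_mul_exp_integral_of_le_add_integral_s4 {K : ℝ} {φ f : ℝ → ℝ}
    (hφ : ContinuousOn φ (Set.Icc a b)) (hφ_nonneg : ∀ s ∈ Set.Icc a b, 0 ≤ φ s)
    (hf : ContinuousOn f (Set.Icc a b))
    (hle : ∀ r ∈ Set.Icc a b, f r ≤ K + ∫ s in r..b, φ s * f s) {t : ℝ}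
    (ht : t ∈ Set.Icc a b) :
    f t ≤ K * Real.exp (∫ s in t..b, φ s) := by
  have hab : a ≤ b := ht.1.trans ht.2
  set g := fun r => ∫ s in r..b, φ s * f s
  set ψ := fun r => ∫ s in r..b, φ s
  have hφf : ContinuousOn (fun s => φ s * f s) (Set.Icc a b) := hφ.mul hf
  -- `(K + g) e^{-ψ}` has derivative `φ (K + g - f) e^{-ψ} ≥ 0`.
  have hmono : MonotoneOn (fun r => (K + g r) * Real.exp (-ψ r)) (Set.Icc a b) := by
    refine monotoneOn_of_hasDerivWithinAt_nonneg (convex_Icc a b)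
      (f' := fun x => -(φ x * f x) * Real.exp (-ψ x) + (K + g x) * (Real.exp (-ψ x) * φ x))
      ((continuousOn_const.add (continuousOn_integral_left_of_continuousOn hab hφf)).mul
        (continuousOn_integral_left_of_continuousOn hab hφ).neg.rexp)
      (fun x hx => ?_) fun x hx => ?_
    all_goals rw [interior_Icc] at hx
    · have hg := hasDerivAt_integral_left_of_continuousOn hφf hx
      have hψ := (hasDerivAt_integral_left_of_continuousOn hφ hx).neg.exp
      rw [neg_neg] at hψ
      exact ((hg.const_add K).mul hψ).hasDerivWithinAt
    · have hx' := Set.Ioo_subset_Icc_self hx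
      have := mul_nonneg (mul_nonneg (hφ_nonneg x hx') (sub_nonneg.mpr (hle x hx')))
        (Real.exp_pos (-ψ x)).le
      linarith
  have hbound := hmono ht ⟨hab, le_rfl⟩ ht.2
  simp only [g, ψ, integral_same, add_zero, neg_zero, Real.exp_zero, mul_one] at hbound
  rw [Real.exp_neg, ← div_eq_mul_inv, div_le_iff₀ (Real.exp_pos _)] at hbound
  exact (hle t ht).trans hbound

end IntervalIntegral

theorem apriori_bound_integral_form_general {n : ℕ} (T : ℝ)
    (A C : ℝ → Matrix (Fin n) (Fin n) ℝ)
    (hA : ContinuousOn A (Set.Icc 0 T)) (hC : ContinuousOn C (Set.Icc 0 T))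
    (P : ℝ → Matrix (Fin n) (Fin n) ℝ)
    (Qhat Ghat GT : Matrix (Fin n) (Fin n) ℝ)
    (hGTle : (Ghat - GT).PosSemidef)
    (hPcont : ContinuousOn P (Set.Icc 0 T))
    (hPpos : ∀ t ∈ Set.Icc (0:ℝ) T, (P t).PosSemidef)
    (hineq : ∀ t ∈ Set.Icc (0:ℝ) T,
      ((∫ s in t..T, (P s * A s + (A s)ᵀ * P s + (C s)ᵀ * P s * C s + Qhat)) -
        (P t - GT)).PosSemidef) :
    ∀ t ∈ Set.Icc (0:ℝ) T,
      ‖P t‖ ≤ (‖Ghat‖ + T * ‖Qhat‖) *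
        Real.exp (∫ s in t..T, (2 * ‖A s‖ + ‖C s‖ ^ 2)) := by
  intro t ht
  have hφ : ContinuousOn (fun s => 2 * ‖A s‖ + ‖C s‖ ^ 2) (Set.Icc 0 T) :=
    (continuousOn_const.mul hA.norm).add (hC.norm.pow 2)
  have hintegrand : ContinuousOn
      (fun s => P s * A s + (A s)ᵀ * P s + (C s)ᵀ * P s * C s + Qhat) (Set.Icc 0 T) := by
    have hAt := continuous_id.matrix_transpose.comp_continuousOn hA
    have hCt := continuous_id.matrix_transpose.comp_continuousOn hC
    exact (((hPcont.mul hA).add (hAt.mul hPcont)).add ((hCt.mul hPcont).mul hC)).add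
      continuousOn_const
  refine le_mul_exp_integral_of_le_add_integral_s4 hφ (fun s _ => by positivity) hPcont.norm
    (fun r hr => ?_) ht
  have hsub : Set.Icc r T ⊆ Set.Icc 0 T := Set.Icc_subset_Icc_left hr.1
  set I := ∫ s in r..T, (P s * A s + (A s)ᵀ * P s + (C s)ᵀ * P s * C s + Qhat)
  have hLoewner : (Ghat + I - P r).PosSemidef := by
    convert hGTle.add (hineq r hr) using 1; abel
  have hPr : ‖P r‖ ≤ ‖Ghat‖ + ‖I‖ :=
    ((hPpos r hr).l2_opNorm_le_of_posSemidef_sub_s4 hLoewner).trans (norm_add_le _ _)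
  have hI : ‖I‖ ≤ (∫ s in r..T, (2 * ‖A s‖ + ‖C s‖ ^ 2) * ‖P s‖) + (T - r) * ‖Qhat‖ :=
    norm_integral_le_integral_add_mul_of_continuousOn hr.2 (hintegrand.mono hsub)
      ((hφ.mul hPcont.norm).mono hsub)
      fun s _ => l2_opNorm_mul_add_transpose_mul_add_transpose_mul_mul_add_le _ _ _ _
  nlinarith [norm_nonneg Qhat, hr.1]

/-- Grönwall-type a priori bound, integral form (Proposition 3.1). -/
theorem apriori_bound_integral_form {n : ℕ} (T : ℝ) (hT : 0 < T)
    (A C : ℝ → Matrix (Fin n) (Fin n) ℝ)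
    (hA : ContinuousOn A (Set.Icc 0 T)) (hC : ContinuousOn C (Set.Icc 0 T))
    (P : ℝ → Matrix (Fin n) (Fin n) ℝ)
    (Qhat Ghat GT : Matrix (Fin n) (Fin n) ℝ)
    (hQhat : Qhat.PosSemidef)
    (hGT : GT.PosSemidef) (hGTle : (Ghat - GT).PosSemidef)
    (hPcont : ContinuousOn P (Set.Icc 0 T))
    (hPpos : ∀ t ∈ Set.Icc (0:ℝ) T, (P t).PosSemidef)
    (hineq : ∀ t ∈ Set.Icc (0:ℝ) T,
      ((∫ s in t..T, (P s * A s + (A s)ᵀ * P s + (C s)ᵀ * P s * C s + Qhat)) -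
        (P t - GT)).PosSemidef) :
    ∀ t ∈ Set.Icc (0:ℝ) T,
      ‖P t‖ ≤ (‖Ghat‖ + T * ‖Qhat‖) *
        Real.exp (∫ s in t..T, (2 * ‖A s‖ + ‖C s‖ ^ 2)) :=
  apriori_bound_integral_form_general T A C hA hC P Qhat Ghat GT hGTle hPcont hPpos hineq
end

section
/- Let Q : Δ*[0,T] → S^n be continuous on Δ*[0,T] = {(t,s) : 0 ≤ t ≤ s ≤ T} with δI ≤ Q(t,s) ≤ Q(r,s) ≤ Q̂ whenever 0 ≤ t ≤ r ≤ s ≤ T, where δ > 0 and Q̂ is positive definite. Then there exists a sequence Q_n : Δ*[0,T] → S^n, continuous, such that: (i) for each fixed s, t ↦ Q_n(t,s) is infinitely differentiable on [0,s]; (ii) δI ≤ Q_n(t,s) ≤ Q_n(r,s) ≤ Q̂ for 0 ≤ t ≤ r ≤ s ≤ T; and (iii) ∫₀^T sup_{t∈[0,s]} |Q_n(t,s) − Q(t,s)|² ds → 0 as n → ∞. -/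
attribute [local instance] Matrix.frobeniusNormedAddCommGroup Matrix.frobeniusNormedSpace

section Aux

open Matrix Finset Real

variable {n : ℕ}

private theorem psd_diag_nonneg {P : Matrix (Fin n) (Fin n) ℝ} (hP : P.PosSemidef) (i : Fin n) :
    0 ≤ P i i := by
  have := hP.dotProduct_mulVec_nonneg (Pi.single i 1)
  simpa [dotProduct, mulVec, Pi.single_apply, Finset.sum_ite_eq', mul_comm] using this

private theorem psd_entry_sq {P : Matrix (Fin n) (Fin n) ℝ} (hP : P.PosSemidef) (i j : Fin n) :
    P i j ^ 2 ≤ P i i * P j j := by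
  have hsym : P j i = P i j := by
    have h1 := hP.1
    conv_lhs => rw [← h1]
    simp [conjTranspose_apply]
  have key : ∀ x : ℝ, 0 ≤ P i i * (x * x) + (2 * P i j) * x + P j j := by
    intro x
    rcases eq_or_ne i j with rfl | hij
    · have := psd_diag_nonneg hP i
      nlinarith [sq_nonneg (x + 1), sq_nonneg x]
    · have h2 := hP.dotProduct_mulVec_nonneg (fun l => x * (if l = i then (1:ℝ) else 0) + (if l = j then 1 else 0))
      have heq : star (fun l => x * (if l = i then (1:ℝ) else 0) + (if l = j then 1 else 0)) ⬝ᵥ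
          P *ᵥ (fun l => x * (if l = i then (1:ℝ) else 0) + (if l = j then 1 else 0))
          = P i i * (x * x) + (2 * P i j) * x + P j j := by
        simp only [star_trivial, dotProduct, mulVec]
        simp [mul_add, add_mul, Finset.mul_sum, Finset.sum_add_distrib, mul_ite,
          Finset.sum_ite_eq', hij, hij.symm, hsym]
        ring
      rw [heq] at h2
      exact h2
  have hd := discrim_le_zero key
  rw [discrim] at hd
  nlinarith

private theorem frob_sq (A : Matrix (Fin n) (Fin n) ℝ) : ‖A‖ ^ 2 = ∑ i, ∑ j, A i j ^ 2 := by
  have hS : (0:ℝ) ≤ ∑ i, ∑ j, ‖A i j‖ ^ (2:ℝ) := by positivity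
  rw [Matrix.frobenius_norm_def, ← Real.rpow_natCast (_ ^ (1/2:ℝ)) 2, ← Real.rpow_mul hS]
  norm_num

private theorem norm_le_trace {P : Matrix (Fin n) (Fin n) ℝ} (hP : P.PosSemidef) :
    ‖P‖ ≤ P.trace := by
  have h1 : ‖P‖ ^ 2 ≤ P.trace ^ 2 := by
    rw [frob_sq]
    have h2 : P.trace ^ 2 = ∑ i, ∑ j, P i i * P j j := by
      rw [Matrix.trace, sq, Finset.sum_mul_sum]
      simp [Matrix.diag]
    rw [h2]
    exact Finset.sum_le_sum fun i _ => Finset.sum_le_sum fun j _ => psd_entry_sq hP i j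
  have htr : 0 ≤ P.trace := Finset.sum_nonneg fun i _ => psd_diag_nonneg hP i
  nlinarith [norm_nonneg P]

private theorem entry_le_norm (A : Matrix (Fin n) (Fin n) ℝ) (i j : Fin n) : |A i j| ≤ ‖A‖ := by
  have h1 : A i j ^ 2 ≤ ‖A‖ ^ 2 := by
    rw [frob_sq]
    calc A i j ^ 2 ≤ ∑ j', A i j' ^ 2 :=
          Finset.single_le_sum (f := fun j' => A i j' ^ 2) (fun _ _ => sq_nonneg _)
            (Finset.mem_univ j)
      _ ≤ ∑ i', ∑ j', A i' j' ^ 2 :=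
          Finset.single_le_sum (f := fun i' => ∑ j', A i' j' ^ 2)
            (fun i' _ => Finset.sum_nonneg fun _ _ => sq_nonneg _) (Finset.mem_univ i)
  nlinarith [norm_nonneg A, abs_nonneg (A i j), sq_abs (A i j)]

private theorem trace_le_card_norm {P : Matrix (Fin n) (Fin n) ℝ} (hP : P.PosSemidef) :
    P.trace ≤ n * ‖P‖ := by
  rw [Matrix.trace]
  calc ∑ i, P.diag i ≤ ∑ _i : Fin n, ‖P‖ := Finset.sum_le_sum fun i _ =>
        (le_abs_self _).trans (entry_le_norm P i i)
    _ = n * ‖P‖ := by simp [mul_comm]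

private theorem trace_mono {X Y : Matrix (Fin n) (Fin n) ℝ} (h : (Y - X).PosSemidef) :
    X.trace ≤ Y.trace := by
  have h1 : 0 ≤ (Y - X).trace := Finset.sum_nonneg fun i _ => psd_diag_nonneg h i
  rw [Matrix.trace_sub] at h1
  linarith

private theorem psd_smul {c : ℝ} (hc : 0 ≤ c) {M : Matrix (Fin n) (Fin n) ℝ}
    (hM : M.PosSemidef) : (c • M).PosSemidef := by
  refine .of_dotProduct_mulVec_nonneg ?_ fun x => ?_
  · have h1 := hM.1
    unfold Matrix.IsHermitian at *
    rw [conjTranspose_smul, h1]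
    simp
  · rw [smul_mulVec, dotProduct_smul]
    exact mul_nonneg hc (hM.dotProduct_mulVec_nonneg x)

private theorem psd_sum {m : ℕ} {D : ℕ → Matrix (Fin n) (Fin n) ℝ}
    (h : ∀ j ∈ Finset.range m, (D j).PosSemidef) :
    (∑ j ∈ Finset.range m, D j).PosSemidef := by
  classical
  induction m with
  | zero => simpa using Matrix.PosSemidef.zero
  | succ m ih =>
    rw [Finset.sum_range_succ]
    exact (ih fun j hj => h j (Finset.mem_range.2
      (by have := Finset.mem_range.1 hj; omega))).add (h m (Finset.mem_range.2 (by omega)))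

private theorem sandwich_norm {A B X : Matrix (Fin n) (Fin n) ℝ}
    (h1 : (X - A).PosSemidef) (h2 : (B - X).PosSemidef) : ‖X - A‖ ≤ n * ‖B - A‖ := by
  have hBA : (B - A).PosSemidef := by
    have := h1.add h2
    simpa [sub_add_sub_cancel'] using this
  calc ‖X - A‖ ≤ (X - A).trace := norm_le_trace h1
    _ ≤ (B - A).trace := trace_mono (by simpa [sub_sub_sub_cancel_right] using h2)
    _ ≤ n * ‖B - A‖ := trace_le_card_norm hBA

private theorem tele_sum {M : Type*} [AddCommGroup M] [Module ℝ M]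
    (f : ℕ → M) (m K : ℕ) (hm : m ≤ K) :
    ∑ j ∈ Finset.range K, (if j < m then (1:ℝ) else 0) • (f (j+1) - f j) = f m - f 0 := by
  have h1 : ∑ j ∈ Finset.range K, (if j < m then (1:ℝ) else 0) • (f (j+1) - f j)
      = ∑ j ∈ Finset.range m, (if j < m then (1:ℝ) else 0) • (f (j+1) - f j) := by
    refine (Finset.sum_subset (Finset.range_subset_range.2 hm) fun x _ hx' => ?_).symm
    rw [Finset.mem_range] at hx'
    simp [hx']
  rw [h1, Finset.sum_congr rfl (fun j hj => by
    rw [if_pos (Finset.mem_range.1 hj), one_smul]), Finset.sum_range_sub f m]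

end Aux

set_option maxHeartbeats 1000000 in
/-- second half of Lemma 2.5: a continuous matrix function `Q` on the
triangle with `δI ≤ Q(t,s) ≤ Q(r,s) ≤ Q̂` can be approximated by functions `Q_n` that are
smooth in `t`, obey the same Loewner bounds and monotonicity in `t`, and converge in the
mixed sup/L² sense. -/
theorem smooth_monotone_approximation_two_vars {n : ℕ} (T δ : ℝ) (hT : 0 < T) (hδ : 0 < δ)
    (Q : ℝ → ℝ → Matrix (Fin n) (Fin n) ℝ)
    (hQc : ContinuousOn (fun p : ℝ × ℝ => Q p.1 p.2)
      {p : ℝ × ℝ | 0 ≤ p.1 ∧ p.1 ≤ p.2 ∧ p.2 ≤ T})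
    (Qhat : Matrix (Fin n) (Fin n) ℝ) (hQhat : Qhat.PosDef)
    (hord : ∀ t r s : ℝ, 0 ≤ t → t ≤ r → r ≤ s → s ≤ T →
      (Q t s - δ • (1 : Matrix (Fin n) (Fin n) ℝ)).PosSemidef ∧
      (Q r s - Q t s).PosSemidef ∧ (Qhat - Q r s).PosSemidef) :
    ∃ Qn : ℕ → ℝ → ℝ → Matrix (Fin n) (Fin n) ℝ,
      (∀ k, ContinuousOn (fun p : ℝ × ℝ => Qn k p.1 p.2)
        {p : ℝ × ℝ | 0 ≤ p.1 ∧ p.1 ≤ p.2 ∧ p.2 ≤ T}) ∧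
      (∀ k, ∀ s ∈ Set.Icc (0:ℝ) T, ContDiffOn ℝ (⊤ : ℕ∞) (fun t => Qn k t s) (Set.Icc 0 s)) ∧
      (∀ k, ∀ t r s : ℝ, 0 ≤ t → t ≤ r → r ≤ s → s ≤ T →
        (Qn k t s - δ • (1 : Matrix (Fin n) (Fin n) ℝ)).PosSemidef ∧
        (Qn k r s - Qn k t s).PosSemidef ∧ (Qhat - Qn k r s).PosSemidef) ∧
      Filter.Tendsto (fun k => ∫ s in (0:ℝ)..T,
          (⨆ t : Set.Icc (0:ℝ) s, ‖Qn k (↑t) s - Q (↑t) s‖) ^ 2)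
        Filter.atTop (nhds 0) := by
  classical
  set Tri : Set (ℝ × ℝ) := {p : ℝ × ℝ | 0 ≤ p.1 ∧ p.1 ≤ p.2 ∧ p.2 ≤ T} with hTri
  -- the mesh size
  set h : ℕ → ℝ := fun k => T / (k + 1) with hh_def
  have hh : ∀ k, 0 < h k := fun k => by positivity
  have hhT : ∀ k : ℕ, ((k:ℝ) + 1) * h k = T := fun k => by
    simp only [hh_def]
    field_simp
  -- the analytic quasi-step coefficient functions
  set χ : ℕ → ℕ → ℝ → ℝ :=
    fun k j t => (1 + Real.exp ((k:ℝ) * (1 - 2 * ((t - j * h k) / h k))))⁻¹ with hχ_def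
  -- the nodes
  set node : ℕ → ℕ → ℝ → ℝ := fun k j s => min (j * h k) s with hnode_def
  -- the increments
  set D : ℕ → ℝ → ℕ → Matrix (Fin n) (Fin n) ℝ :=
    fun k s j => Q (node k (j+1) s) s - Q (node k j s) s with hD_def
  -- basic properties of χ
  have hχ0 : ∀ k j t, 0 ≤ χ k j t := fun k j t => by
    rw [hχ_def]; positivity
  have hχ1 : ∀ k j t, χ k j t ≤ 1 := by
    intro k j t
    rw [hχ_def]
    have he : 0 ≤ Real.exp ((k:ℝ) * (1 - 2 * ((t - j * h k) / h k))) := Real.exp_nonneg _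
    rw [inv_le_one_iff₀]
    right; linarith
  have hχmono : ∀ k j, Monotone (χ k j) := by
    intro k j t r htr
    rw [hχ_def]
    simp only
    have hx : (t - j * h k) / h k ≤ (r - j * h k) / h k := by
      gcongr
    have harg : (k:ℝ) * (1 - 2 * ((r - j * h k) / h k))
        ≤ (k:ℝ) * (1 - 2 * ((t - j * h k) / h k)) := by
      have : (0:ℝ) ≤ (k:ℝ) := Nat.cast_nonneg k
      nlinarith
    have hexp := Real.exp_le_exp.2 harg
    have hp : (0:ℝ) < 1 + Real.exp ((k:ℝ) * (1 - 2 * ((r - j * h k) / h k))) := by positivity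
    exact inv_anti₀ hp (by linarith)
  have hχhigh : ∀ (k j : ℕ) (t : ℝ), 1 ≤ (t - j * h k) / h k → 1 - χ k j t ≤ Real.exp (-(k:ℝ)) := by
    intro k j t hx
    rw [hχ_def]
    simp only
    set e := Real.exp ((k:ℝ) * (1 - 2 * ((t - j * h k) / h k))) with he_def
    have hepos : 0 < e := Real.exp_pos _
    have hle : e ≤ Real.exp (-(k:ℝ)) := by
      rw [he_def]
      apply Real.exp_le_exp.2
      have : (0:ℝ) ≤ (k:ℝ) := Nat.cast_nonneg k
      nlinarith
    have hinv : (1:ℝ) - e ≤ (1 + e)⁻¹ := by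
      have hmul : (1 + e) * (1 + e)⁻¹ = 1 := mul_inv_cancel₀ (by positivity)
      nlinarith [inv_nonneg.2 (by positivity : (0:ℝ) ≤ 1 + e)]
    linarith
  have hχlow : ∀ (k j : ℕ) (t : ℝ), (t - j * h k) / h k ≤ 0 → χ k j t ≤ Real.exp (-(k:ℝ)) := by
    intro k j t hx
    rw [hχ_def]
    simp only
    set e := Real.exp ((k:ℝ) * (1 - 2 * ((t - j * h k) / h k))) with he_def
    have hepos : 0 < e := Real.exp_pos _
    have hge : Real.exp (k:ℝ) ≤ e := by
      rw [he_def]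
      apply Real.exp_le_exp.2
      have : (0:ℝ) ≤ (k:ℝ) := Nat.cast_nonneg k
      nlinarith
    have h1 : (1 + e)⁻¹ ≤ (Real.exp (k:ℝ))⁻¹ := by
      apply inv_anti₀ (Real.exp_pos _)
      linarith
    rw [← Real.exp_neg] at h1
    exact h1
  -- positive semidefiniteness of the increments
  have hDpsd : ∀ k (s : ℝ), 0 ≤ s → s ≤ T → ∀ j, (D k s j).PosSemidef := by
    intro k s h0s hsT j
    refine (hord (node k j s) (node k (j+1) s) s ?_ ?_ (min_le_right _ _) hsT).2.1
    · exact le_min (by positivity) h0s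
    · refine min_le_min ?_ le_rfl
      push_cast
      nlinarith [(hh k).le]
  have hnode0 : ∀ k (s : ℝ), 0 ≤ s → node k 0 s = 0 := by
    intro k s h0s
    simp only [hnode_def]
    push_cast
    simp [min_eq_left h0s]
  have hnode_end : ∀ k (s : ℝ), s ≤ T → node k (k+1) s = s := by
    intro k s hsT
    have hc : ((k+1:ℕ):ℝ) * h k = T := by push_cast; exact hhT k
    simp only [hnode_def]
    rw [hc]
    exact min_eq_right hsT
  -- telescoping identity
  have hQtele : ∀ k (s : ℝ) (m : ℕ), m ≤ k+1 → (0:ℝ) ≤ s →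
      ∑ j ∈ Finset.range (k+1), (if j < m then (1:ℝ) else 0) • D k s j
        = Q (node k m s) s - Q 0 s := by
    intro k s m hm h0s
    have h1 := tele_sum (fun j => Q (node k j s) s) m (k+1) hm
    rw [hnode0 k s h0s] at h1
    exact h1
  -- sandwiching lemmas
  have hsand : ∀ k (s : ℝ), 0 ≤ s → s ≤ T → ∀ (c : ℕ → ℝ) (m : ℕ), m ≤ k+1 →
      (∀ j, j < m → c j = 1) → (∀ j, 0 ≤ c j) →
      ((Q 0 s + ∑ j ∈ Finset.range (k+1), c j • D k s j) - Q (node k m s) s).PosSemidef := by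
    intro k s h0s hsT c m hm hc1 hc0
    have h5 : ∑ j ∈ Finset.range (k+1), (c j - if j < m then (1:ℝ) else 0) • D k s j
        = (∑ j ∈ Finset.range (k+1), c j • D k s j)
          - ∑ j ∈ Finset.range (k+1), (if j < m then (1:ℝ) else 0) • D k s j := by
      rw [← Finset.sum_sub_distrib]
      exact Finset.sum_congr rfl fun j _ => sub_smul _ _ _
    have heq : (Q 0 s + ∑ j ∈ Finset.range (k+1), c j • D k s j) - Q (node k m s) s
        = ∑ j ∈ Finset.range (k+1), (c j - if j < m then (1:ℝ) else 0) • D k s j := by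
      rw [h5, hQtele k s m hm h0s]
      abel
    rw [heq]
    refine psd_sum fun j _ => psd_smul ?_ (hDpsd k s h0s hsT j)
    by_cases hj : j < m
    · rw [if_pos hj, hc1 j hj]; simp
    · rw [if_neg hj]; simpa using hc0 j
  have hsand' : ∀ k (s : ℝ), 0 ≤ s → s ≤ T → ∀ (c : ℕ → ℝ) (m : ℕ), m ≤ k+1 →
      (∀ j, m ≤ j → j < k+1 → c j = 0) → (∀ j, c j ≤ 1) →
      (Q (node k m s) s - (Q 0 s + ∑ j ∈ Finset.range (k+1), c j • D k s j)).PosSemidef := by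
    intro k s h0s hsT c m hm hc0 hc1
    have h5 : ∑ j ∈ Finset.range (k+1), ((if j < m then (1:ℝ) else 0) - c j) • D k s j
        = (∑ j ∈ Finset.range (k+1), (if j < m then (1:ℝ) else 0) • D k s j)
          - ∑ j ∈ Finset.range (k+1), c j • D k s j := by
      rw [← Finset.sum_sub_distrib]
      exact Finset.sum_congr rfl fun j _ => sub_smul _ _ _
    have heq : Q (node k m s) s - (Q 0 s + ∑ j ∈ Finset.range (k+1), c j • D k s j)
        = ∑ j ∈ Finset.range (k+1), ((if j < m then (1:ℝ) else 0) - c j) • D k s j := by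
      rw [h5, hQtele k s m hm h0s]
      abel
    rw [heq]
    refine psd_sum fun j hj => psd_smul ?_ (hDpsd k s h0s hsT j)
    by_cases hjm : j < m
    · rw [if_pos hjm]
      simpa using hc1 j
    · rw [if_neg hjm, hc0 j (by omega) (Finset.mem_range.1 hj)]
      simp
  refine ⟨fun k t s => Q 0 s + ∑ j ∈ Finset.range (k+1), χ k j t • D k s j, ?_, ?_, ?_, ?_⟩
  · -- continuity
    intro k
    have hcomp : ∀ j : ℕ, ContinuousOn (fun p : ℝ × ℝ => Q (node k j p.2) p.2) Tri := by
      intro j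
      refine hQc.comp (Continuous.continuousOn
        ((continuous_const.min continuous_snd).prodMk continuous_snd)) ?_
      intro p hp
      refine ⟨le_min (by positivity) (hp.1.trans hp.2.1), min_le_right _ _, hp.2.2⟩
    refine ContinuousOn.add ?_ ?_
    · refine hQc.comp (Continuous.continuousOn (continuous_const.prodMk continuous_snd)) ?_
      intro p hp
      exact ⟨le_refl 0, hp.1.trans hp.2.1, hp.2.2⟩
    · refine continuousOn_finset_sum _ fun j _ =>
        ContinuousOn.fun_smul ?_ ((hcomp (j+1)).sub (hcomp j))
      refine Continuous.continuousOn ?_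
      rw [hχ_def]
      have hb : Continuous fun p : ℝ × ℝ =>
          1 + Real.exp ((k:ℝ) * (1 - 2 * ((p.1 - j * h k) / h k))) := by
        fun_prop
      exact hb.inv₀ fun p => by positivity
  · -- smoothness in t
    intro k s _
    refine ContDiff.contDiffOn ?_
    refine contDiff_const.add (ContDiff.sum fun j _ => ContDiff.fun_smul ?_ contDiff_const)
    rw [hχ_def]
    have hb : ContDiff ℝ (⊤ : ℕ∞) fun t : ℝ =>
        1 + Real.exp ((k:ℝ) * (1 - 2 * ((t - j * h k) / h k))) := by
      refine contDiff_const.add (Real.contDiff_exp.comp ?_)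
      exact contDiff_const.mul (contDiff_const.sub
        (contDiff_const.mul ((contDiff_id.sub contDiff_const).div_const _)))
    exact hb.inv fun t => by positivity
  · -- Loewner bounds and monotonicity
    intro k t r s ht htr hrs hsT
    have h0s : (0:ℝ) ≤ s := ht.trans (htr.trans hrs)
    refine ⟨?_, ?_, ?_⟩
    · -- lower bound
      have heq : (Q 0 s + ∑ j ∈ Finset.range (k+1), χ k j t • D k s j)
          - δ • (1 : Matrix (Fin n) (Fin n) ℝ)
          = (Q 0 s - δ • (1 : Matrix (Fin n) (Fin n) ℝ))
            + ∑ j ∈ Finset.range (k+1), χ k j t • D k s j := by abel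
      rw [heq]
      exact ((hord 0 0 s le_rfl le_rfl h0s hsT).1).add
        (psd_sum fun j _ => psd_smul (hχ0 k j t) (hDpsd k s h0s hsT j))
    · -- monotonicity in t
      have heq : (Q 0 s + ∑ j ∈ Finset.range (k+1), χ k j r • D k s j)
          - (Q 0 s + ∑ j ∈ Finset.range (k+1), χ k j t • D k s j)
          = ∑ j ∈ Finset.range (k+1), (χ k j r - χ k j t) • D k s j := by
        rw [add_sub_add_left_eq_sub, ← Finset.sum_sub_distrib]
        exact Finset.sum_congr rfl fun j _ => (sub_smul _ _ _).symm
      rw [heq]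
      exact psd_sum fun j _ =>
        psd_smul (sub_nonneg.2 (hχmono k j htr)) (hDpsd k s h0s hsT j)
    · -- upper bound
      have h1 := hsand' k s h0s hsT (fun j => χ k j r) (k+1) le_rfl
        (fun j hj hj' => by omega) (fun j => hχ1 k j r)
      rw [hnode_end k s hsT] at h1
      have heq : Qhat - (Q 0 s + ∑ j ∈ Finset.range (k+1), χ k j r • D k s j)
          = (Qhat - Q s s)
            + (Q s s - (Q 0 s + ∑ j ∈ Finset.range (k+1), χ k j r • D k s j)) := by abel
      rw [heq]
      exact ((hord 0 s s le_rfl h0s le_rfl hsT).2.2).add h1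
  · -- convergence
    rw [NormedAddCommGroup.tendsto_nhds_zero]
    intro ε hε
    -- uniform continuity of Q on the compact triangle
    have hTriclosed : IsClosed Tri := by
      have h1 : IsClosed {p : ℝ × ℝ | 0 ≤ p.1} := isClosed_le continuous_const continuous_fst
      have h2 : IsClosed {p : ℝ × ℝ | p.1 ≤ p.2} := isClosed_le continuous_fst continuous_snd
      have h3 : IsClosed {p : ℝ × ℝ | p.2 ≤ T} := isClosed_le continuous_snd continuous_const
      exact (h1.inter (h2.inter h3) : _)
    have hTriC : IsCompact Tri := by
      refine IsCompact.of_isClosed_subset (isCompact_Icc (a := ((0:ℝ),(0:ℝ))) (b := (T,T)))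
        hTriclosed ?_
      intro p hp
      simp only [Set.mem_Icc, Prod.le_def]
      exact ⟨⟨hp.1, hp.1.trans hp.2.1⟩, ⟨(hp.2.1.trans hp.2.2), hp.2.2⟩⟩
    have hQu := hTriC.uniformContinuousOn_of_continuous hQc
    replace hQu := Metric.uniformContinuousOn_iff.1 hQu
    set β := Real.sqrt (ε / T) with hβ_def
    have hβpos : 0 < β := Real.sqrt_pos.2 (by positivity)
    set ε₁ := β / (4 * ((n:ℝ) + 1)) with hε₁_def
    have hε₁ : 0 < ε₁ := by positivity
    obtain ⟨d, hd, hQd⟩ := hQu ε₁ hε₁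
    set C := (n:ℝ) * ‖Qhat - δ • (1 : Matrix (Fin n) (Fin n) ℝ)‖ with hC_def
    have hC0 : 0 ≤ C := by positivity
    have hev1 : ∀ᶠ k : ℕ in Filter.atTop, h k < d := by
      have h2 : Filter.Tendsto (fun k : ℕ => h k) Filter.atTop (nhds 0) := by
        have h3 := tendsto_one_div_add_atTop_nhds_zero_nat.const_mul T
        rw [mul_zero] at h3
        refine h3.congr fun k => ?_
        rw [hh_def]
        ring
      exact h2.eventually_lt_const hd
    have hev2 : ∀ᶠ k : ℕ in Filter.atTop, Real.exp (-(k:ℝ)) * C < β / 4 := by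
      have h4 : Filter.Tendsto (fun k : ℕ => Real.exp (-(k:ℝ)) * C)
          Filter.atTop (nhds 0) := by
        have h5 : Filter.Tendsto (fun k : ℕ => Real.exp (-(k:ℝ))) Filter.atTop (nhds 0) :=
          Real.tendsto_exp_atBot.comp
            (Filter.tendsto_neg_atBot_iff.2 tendsto_natCast_atTop_atTop)
        simpa using h5.mul_const C
      exact h4.eventually_lt_const (by positivity)
    filter_upwards [hev1, hev2] with k hkd hkη
    -- pointwise estimate
    have hpt : ∀ s : ℝ, 0 < s → s ≤ T → ∀ t : ℝ, 0 ≤ t → t ≤ s →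
        ‖(Q 0 s + ∑ j ∈ Finset.range (k+1), χ k j t • D k s j) - Q t s‖ ≤ 3 * β / 4 := by
      intro s hs0 hsT t ht0 hts
      have h0s : (0:ℝ) ≤ s := hs0.le
      set j₀ := ⌊t / h k⌋₊ with hj₀_def
      set m := min j₀ (k+1) with hm_def
      set m' := min (j₀+1) (k+1) with hm'_def
      set a := node k m s with ha_def
      set b := node k m' s with hb_def
      set cc : ℕ → ℝ := fun j => if j < m then (1:ℝ) else if j < m' then χ k j t else 0
        with hcc_def
      -- basic facts about the floor
      have hj₀le : (j₀:ℝ) * h k ≤ t := by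
        rw [← le_div_iff₀ (hh k)]
        exact Nat.floor_le (by positivity)
      have hj₀lt : t < ((j₀:ℝ) + 1) * h k := by
        rw [← div_lt_iff₀ (hh k)]
        exact_mod_cast Nat.lt_floor_add_one (t / h k)
      -- properties of a and b
      have ha0 : 0 ≤ a := le_min (by positivity) h0s
      have hat : a ≤ t := by
        refine (min_le_left _ _).trans ?_
        refine le_trans ?_ hj₀le
        have : (m:ℝ) ≤ (j₀:ℝ) := by exact_mod_cast (min_le_left _ _ : m ≤ j₀)
        nlinarith [(hh k).le]
      have htb : t ≤ b := by
        refine le_min ?_ hts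
        rcases le_or_gt (j₀+1) (k+1) with hcase | hcase
        · have : m' = j₀ + 1 := min_eq_left hcase
          rw [this]
          push_cast
          linarith
        · have : m' = k + 1 := min_eq_right (by omega)
          rw [this]
          have hc : ((k+1:ℕ):ℝ) * h k = T := by push_cast; exact hhT k
          rw [hc]
          linarith
      have hab : a ≤ b := by
        refine min_le_min ?_ le_rfl
        have : (m:ℝ) ≤ (m':ℝ) := by exact_mod_cast (by omega : m ≤ m')
        nlinarith [(hh k).le]
      have hbs : b ≤ s := min_le_right _ _
      have hba : b - a ≤ h k := by
        rcases le_total s ((m:ℝ) * h k) with hcase | hcase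
        · have haa : a = s := min_eq_right hcase
          rw [haa]
          have : b ≤ s := min_le_right _ _
          linarith [(hh k).le]
        · have haa : a = (m:ℝ) * h k := min_eq_left hcase
          have hm'm : (m':ℝ) ≤ (m:ℝ) + 1 := by exact_mod_cast (by omega : m' ≤ m + 1)
          have : b ≤ (m':ℝ) * h k := min_le_left _ _
          rw [haa]
          nlinarith [(hh k).le, (hh k)]
      -- membership in the triangle
      have hamem : ((a, s) : ℝ × ℝ) ∈ Tri := ⟨ha0, hat.trans hts, hsT⟩
      have hbmem : ((b, s) : ℝ × ℝ) ∈ Tri := ⟨ht0.trans htb, hbs, hsT⟩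
      -- Q b s is ε₁-close to Q a s
      have hclose : ‖Q b s - Q a s‖ < ε₁ := by
        have hdist := hQd (b, s) hbmem (a, s) hamem ?_
        · rwa [dist_eq_norm] at hdist
        · rw [Prod.dist_eq]
          simp only [dist_self]
          have : dist b a = b - a := by
            rw [Real.dist_eq, abs_of_nonneg (by linarith)]
          rw [this]
          simp only [max_eq_left (by linarith : (0:ℝ) ≤ b - a)]
          linarith
      -- the idealized step interpolant
      set Qstep := Q 0 s + ∑ j ∈ Finset.range (k+1), cc j • D k s j with hQstep_def
      have hstep1 : (Qstep - Q a s).PosSemidef := by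
        refine hsand k s h0s hsT cc m (by omega) (fun j hj => by
          rw [hcc_def]; simp [hj]) (fun j => ?_)
        rw [hcc_def]
        by_cases h1 : j < m
        · simp [h1]
        · by_cases h2 : j < m'
          · simp [h1, h2, hχ0 k j t]
          · simp [h1, h2]
      have hstep2 : (Q b s - Qstep).PosSemidef := by
        refine hsand' k s h0s hsT cc m' (by omega) (fun j hj _ => by
          rw [hcc_def]
          have h1 : ¬ j < m := by omega
          have h2 : ¬ j < m' := by omega
          simp [h1, h2]) (fun j => ?_)
        rw [hcc_def]
        by_cases h1 : j < m
        · simp [h1]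
        · by_cases h2 : j < m'
          · simp [h1, h2, hχ1 k j t]
          · simp [h1, h2]
      -- Q t s is sandwiched too
      have hQt1 : (Q t s - Q a s).PosSemidef :=
        (hord a t s ha0 hat hts hsT).2.1
      have hQt2 : (Q b s - Q t s).PosSemidef :=
        (hord t b s ht0 htb hbs hsT).2.1
      -- the error between Qn and Qstep
      have herr : ‖(Q 0 s + ∑ j ∈ Finset.range (k+1), χ k j t • D k s j) - Qstep‖
          ≤ Real.exp (-(k:ℝ)) * C := by
        have heq : (Q 0 s + ∑ j ∈ Finset.range (k+1), χ k j t • D k s j) - Qstep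
            = ∑ j ∈ Finset.range (k+1), (χ k j t - cc j) • D k s j := by
          rw [hQstep_def, add_sub_add_left_eq_sub, ← Finset.sum_sub_distrib]
          exact Finset.sum_congr rfl fun j _ => (sub_smul _ _ _).symm
        rw [heq]
        have hbound : ∀ j ∈ Finset.range (k+1),
            ‖(χ k j t - cc j) • D k s j‖ ≤ Real.exp (-(k:ℝ)) * ‖D k s j‖ := by
          intro j hj
          rw [norm_smul, Real.norm_eq_abs]
          refine mul_le_mul_of_nonneg_right ?_ (norm_nonneg _)
          rw [hcc_def]
          by_cases h1 : j < m
          · -- here χ is within exp(-k) of 1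
            simp only [h1, if_true]
            have hx : 1 ≤ (t - (j:ℝ) * h k) / h k := by
              rw [le_div_iff₀ (hh k)]
              have hjm : ((j:ℝ) + 1) ≤ (j₀:ℝ) := by
                exact_mod_cast (by omega : j + 1 ≤ j₀)
              nlinarith [(hh k).le, hj₀le]
            have := hχhigh k j t hx
            have h01 := hχ1 k j t
            rw [abs_le]
            constructor <;> [linarith; linarith [Real.exp_nonneg (-(k:ℝ)), hχ0 k j t]]
          · by_cases h2 : j < m'
            · simp only [h1, if_false, h2, if_true]
              simpa using Real.exp_nonneg (-(k:ℝ))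
            · simp only [h1, if_false, h2, if_false, sub_zero]
              have hx : (t - (j:ℝ) * h k) / h k ≤ 0 := by
                rw [div_nonpos_iff]
                right
                refine ⟨?_, (hh k).le⟩
                have hjge : ((j₀:ℝ) + 1) ≤ (j:ℝ) := by
                  exact_mod_cast (by rw [Finset.mem_range] at hj; omega : j₀ + 1 ≤ j)
                nlinarith [(hh k).le, hj₀lt]
              have := hχlow k j t hx
              rw [abs_of_nonneg (hχ0 k j t)]
              linarith
        calc ‖∑ j ∈ Finset.range (k+1), (χ k j t - cc j) • D k s j‖
            ≤ ∑ j ∈ Finset.range (k+1), ‖(χ k j t - cc j) • D k s j‖ :=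
              norm_sum_le _ _
          _ ≤ ∑ j ∈ Finset.range (k+1), Real.exp (-(k:ℝ)) * ‖D k s j‖ :=
              Finset.sum_le_sum hbound
          _ = Real.exp (-(k:ℝ)) * ∑ j ∈ Finset.range (k+1), ‖D k s j‖ := by
              rw [Finset.mul_sum]
          _ ≤ Real.exp (-(k:ℝ)) * C := by
              refine mul_le_mul_of_nonneg_left ?_ (Real.exp_nonneg _)
              calc ∑ j ∈ Finset.range (k+1), ‖D k s j‖
                  ≤ ∑ j ∈ Finset.range (k+1), (D k s j).trace :=
                    Finset.sum_le_sum fun j _ => norm_le_trace (hDpsd k s h0s hsT j)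
                _ = (∑ j ∈ Finset.range (k+1), D k s j).trace := (Matrix.trace_sum _ _).symm
                _ ≤ C := by
                    have hsum : ∑ j ∈ Finset.range (k+1), D k s j = Q s s - Q 0 s := by
                      have := hQtele k s (k+1) le_rfl h0s
                      rw [hnode_end k s hsT] at this
                      rw [← this]
                      exact Finset.sum_congr rfl fun j hj => by
                        rw [if_pos (Finset.mem_range.1 hj), one_smul]
                    rw [hsum, hC_def]
                    have hps1 : ((Qhat - δ • (1 : Matrix (Fin n) (Fin n) ℝ))
                        - (Q s s - Q 0 s)).PosSemidef := by
                      have hA := (hord 0 s s le_rfl h0s le_rfl hsT).2.2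
                      have hB := (hord 0 0 s le_rfl le_rfl h0s hsT).1
                      have heq2 : (Qhat - δ • (1 : Matrix (Fin n) (Fin n) ℝ))
                          - (Q s s - Q 0 s) = (Qhat - Q s s)
                            + (Q 0 s - δ • (1 : Matrix (Fin n) (Fin n) ℝ)) := by abel
                      rw [heq2]
                      exact hA.add hB
                    have hps2 : (Qhat - δ • (1 : Matrix (Fin n) (Fin n) ℝ)).PosSemidef := by
                      have hA := (hord 0 s s le_rfl h0s le_rfl hsT).2.2
                      have hB := (hord s s s h0s le_rfl le_rfl hsT).1
                      have heq2 : Qhat - δ • (1 : Matrix (Fin n) (Fin n) ℝ)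
                          = (Qhat - Q s s) + (Q s s - δ • (1 : Matrix (Fin n) (Fin n) ℝ)) := by
                        abel
                      rw [heq2]
                      exact hA.add hB
                    exact (trace_mono hps1).trans (trace_le_card_norm hps2)
      -- assembling the estimate
      have hQsQa : ‖Qstep - Q a s‖ ≤ (n:ℝ) * ‖Q b s - Q a s‖ := sandwich_norm hstep1 hstep2
      have hQtQa : ‖Q t s - Q a s‖ ≤ (n:ℝ) * ‖Q b s - Q a s‖ := sandwich_norm hQt1 hQt2
      have htri1 : ‖(Q 0 s + ∑ j ∈ Finset.range (k+1), χ k j t • D k s j) - Q t s‖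
          ≤ ‖(Q 0 s + ∑ j ∈ Finset.range (k+1), χ k j t • D k s j) - Qstep‖
            + ‖Qstep - Q a s‖ + ‖Q t s - Q a s‖ := by
        have e1 : (Q 0 s + ∑ j ∈ Finset.range (k+1), χ k j t • D k s j) - Q t s
            = ((Q 0 s + ∑ j ∈ Finset.range (k+1), χ k j t • D k s j) - Qstep)
              + ((Qstep - Q a s) - (Q t s - Q a s)) := by abel
        rw [e1]
        refine (norm_add_le _ _).trans ?_
        have := norm_sub_le (Qstep - Q a s) (Q t s - Q a s)
        linarith
      have hn2 : (n:ℝ) * ‖Q b s - Q a s‖ ≤ (n:ℝ) * ε₁ :=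
        mul_le_mul_of_nonneg_left hclose.le (Nat.cast_nonneg n)
      have hfinal : (n:ℝ) * ε₁ + (n:ℝ) * ε₁ ≤ β / 2 := by
        have hn : (0:ℝ) ≤ n := Nat.cast_nonneg n
        have h4 : (0:ℝ) < 4 * ((n:ℝ) + 1) := by positivity
        rw [hε₁_def]
        have heq5 : (n:ℝ) * (β / (4*((n:ℝ)+1))) + (n:ℝ) * (β / (4*((n:ℝ)+1)))
            = (2*(n:ℝ)) * β / (4*((n:ℝ)+1)) := by ring
        rw [heq5, div_le_div_iff₀ h4 (by norm_num : (0:ℝ) < 2)]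
        nlinarith [hβpos.le]
      linarith [htri1, herr, hQsQa, hQtQa, hn2, hkη]
    -- from the pointwise estimate to the integral
    have hInt : ‖∫ s in (0:ℝ)..T, (⨆ t : Set.Icc (0:ℝ) s,
        ‖(Q 0 s + ∑ j ∈ Finset.range (k+1), χ k j (↑t) • D k s j) - Q (↑t) s‖) ^ 2‖
        ≤ (3 * β / 4)^2 * |T - 0| := by
      refine intervalIntegral.norm_integral_le_of_norm_le_const ?_
      intro s hs
      rw [Set.uIoc_of_le hT.le] at hs
      obtain ⟨hs0, hsT⟩ := hs
      have hne : Nonempty (Set.Icc (0:ℝ) s) := ⟨⟨0, le_rfl, hs0.le⟩⟩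
      have hub : ∀ t : Set.Icc (0:ℝ) s,
          ‖(Q 0 s + ∑ j ∈ Finset.range (k+1), χ k j (↑t) • D k s j) - Q (↑t) s‖
            ≤ 3 * β / 4 := fun t => hpt s hs0 hsT t t.2.1 t.2.2
      have hsup_le : (⨆ t : Set.Icc (0:ℝ) s,
          ‖(Q 0 s + ∑ j ∈ Finset.range (k+1), χ k j (↑t) • D k s j) - Q (↑t) s‖)
          ≤ 3 * β / 4 := ciSup_le hub
      have hsup_nonneg : 0 ≤ ⨆ t : Set.Icc (0:ℝ) s,
          ‖(Q 0 s + ∑ j ∈ Finset.range (k+1), χ k j (↑t) • D k s j) - Q (↑t) s‖ :=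
        Real.iSup_nonneg fun t => norm_nonneg _
      rw [Real.norm_eq_abs, abs_of_nonneg (by positivity)]
      exact pow_le_pow_left₀ hsup_nonneg hsup_le 2
    refine lt_of_le_of_lt hInt ?_
    rw [abs_of_pos (by linarith : (0:ℝ) < T - 0)]
    have hβsq : β ^ 2 = ε / T := Real.sq_sqrt (by positivity)
    have : (3 * β / 4)^2 * (T - 0) = (9 / 16) * (β^2 * T) := by ring
    rw [this, hβsq]
    have : ε / T * T = ε := div_mul_cancel₀ ε hT.ne'
    rw [this]
    linarith
end
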